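/- Consider the linear Gaussian model X_{t+1} = ∑_{s=1}^{min(τ,t+1)} A_{t+1,s} X_{t+1-s} + B_{t+1} for 0 ≤ t ≤ T-1 with X_0 ~ N(μ_0, Σ_0), and observations Z_{t+1} = C X_t + W_{t+1} for 0 ≤ t ≤ T, where B_t ~ N(0,Q), W_t ~ N(0,R) are white Gaussian noise processes, and X_0, B, W are mutually independent. Fix f ∈ ℝ^d and a deterministic control u = (u_0,...,u_{T-1}) in ℝ^m, and let y be the backward process y_t = ∑_{s=1}^{min(τ,T-t)} A_{t+s,s}ᵀ y_{t+s} + Cᵀ u_t with y_T = f. Define the estimator S_T = μ_0ᵀ y_0 - ∑_{t=1}^T u_{t-1}ᵀ Z_t. Then E[|fᵀ X_T - S_T|²] = |y_0|²_{Σ_0} + ∑_{t=1}^{T} |y_t|²_Q + ∑_{t=0}^{T-1} |u_t|²_R, i.e., twice the control cost J_T(u; f). -/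

import Mathlib

open Finset Matrix MeasureTheory ProbabilityTheory
open scoped NNReal

/-! Pairing the forward recursion for `X` with the backward recursion for `y` and summing by
parts, the delay terms cancel and
`fᵀX_T - S_T = y_0ᵀ(X_0 - μ_0) + ∑_{t<T} y_{t+1}ᵀB_{t+1} + ∑_{t<T} u_tᵀW_{t+1}`.
The summands are independent centred Gaussians, so the mean square error is the sum of their
variances `|y_0|²_{Σ_0}`, `|y_{t+1}|²_Q` and `|u_t|²_R`. -/

/-- Both sides sum `F a s` over the pairs with `1 ≤ s ≤ min τ a` and `a ≤ T`: the left one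
indexes them by `a = t + 1`, the right one by `a - s = t`. -/
theorem sum_range_sum_Icc_lag_comm {M : Type*} [AddCommMonoid M] (T τ : ℕ)
    (F : ℕ → ℕ → M) :
    ∑ t ∈ range T, ∑ s ∈ Icc 1 (min τ (t + 1)), F (t + 1) s =
      ∑ t ∈ range T, ∑ s ∈ Icc 1 (min τ (T - t)), F (t + s) s := by
  rw [sum_sigma', sum_sigma']
  refine sum_nbij' (fun p => ⟨p.1 + 1 - p.2, p.2⟩) (fun p => ⟨p.1 + p.2 - 1, p.2⟩)
    ?_ ?_ ?_ ?_ ?_ <;>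
  rintro ⟨t, s⟩ hp <;>
  simp only [mem_sigma, mem_range, mem_Icc, le_min_iff] at hp ⊢
  · omega
  · omega
  · simp only [Sigma.mk.injEq, heq_eq_eq, and_true]; omega
  · simp only [Sigma.mk.injEq, heq_eq_eq, and_true]; omega
  · rw [Nat.sub_add_cancel (by omega)]

theorem dotProduct_add_sum_eq_of_adjoint_recursion {𝕜 n k : Type*} [CommRing 𝕜] [Fintype n]
    [Fintype k] (T τ : ℕ) (A : ℕ → ℕ → Matrix n n 𝕜) (C : Matrix k n 𝕜)
    {x b y : ℕ → n → 𝕜} {u : ℕ → k → 𝕜}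
    (hx : ∀ t < T, x (t + 1) =
      (∑ s ∈ Icc 1 (min τ (t + 1)), A (t + 1) s *ᵥ x (t + 1 - s)) + b (t + 1))
    (hy : ∀ t < T, y t =
      (∑ s ∈ Icc 1 (min τ (T - t)), (A (t + s) s)ᵀ *ᵥ y (t + s)) + Cᵀ *ᵥ u t) :
    y T ⬝ᵥ x T + ∑ t ∈ range T, u t ⬝ᵥ C *ᵥ x t =
      y 0 ⬝ᵥ x 0 + ∑ t ∈ range T, y (t + 1) ⬝ᵥ b (t + 1) := by
  set F : ℕ → ℕ → 𝕜 := fun a s => y a ⬝ᵥ A a s *ᵥ x (a - s)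
  have hforward : ∀ t < T, y (t + 1) ⬝ᵥ x (t + 1) =
      ∑ s ∈ Icc 1 (min τ (t + 1)), F (t + 1) s + y (t + 1) ⬝ᵥ b (t + 1) := by
    intro t ht
    rw [hx t ht, dotProduct_add, dotProduct_sum]
  have hbackward : ∀ t < T, y t ⬝ᵥ x t =
      ∑ s ∈ Icc 1 (min τ (T - t)), F (t + s) s + u t ⬝ᵥ C *ᵥ x t := by
    intro t ht
    rw [hy t ht, add_dotProduct, sum_dotProduct]
    simp only [F, Nat.add_sub_cancel, mulVec_transpose, dotProduct_mulVec]
  have htelescope := sum_range_sub (fun t => y t ⬝ᵥ x t) T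
  rw [sum_congr rfl fun t ht => by
      rw [hforward t (mem_range.1 ht), hbackward t (mem_range.1 ht)],
    sum_sub_distrib, sum_add_distrib, sum_add_distrib, sum_range_sum_Icc_lag_comm] at htelescope
  linear_combination -htelescope

theorem integral_sq_sum_of_iIndepFun_gaussianReal {Ω : Type*} [MeasurableSpace Ω]
    {P : Measure Ω} [IsProbabilityMeasure P] {ι : Type*} [Fintype ι]
    {V : ι → Ω → ℝ} {v : ι → ℝ≥0} (hindep : iIndepFun V P)
    (hV : ∀ i, HasLaw (V i) (gaussianReal 0 (v i)) P) :
    ∫ ω, (∑ i, V i ω) ^ 2 ∂P = ∑ i, (v i : ℝ) := by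
  have hL2 : ∀ i, MemLp (V i) 2 P := fun i => (hV i).hasGaussianLaw.memLp_two
  have hmean : P[∑ i, V i] = 0 := by
    rw [funext fun ω => Finset.sum_apply ω univ V,
      integral_finsetSum _ fun i _ => (hL2 i).integrable one_le_two]
    exact sum_eq_zero fun i _ => by rw [(hV i).integral_eq, integral_id_gaussianReal]
  calc ∫ ω, (∑ i, V i ω) ^ 2 ∂P = Var[∑ i, V i; P] := by
        rw [variance_of_integral_eq_zero (by fun_prop) hmean]
        simp only [Finset.sum_apply]
    _ = ∑ i, Var[V i; P] :=
        IndepFun.variance_sum (fun i _ => hL2 i) fun i _ j _ hij => hindep.indepFun hij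
    _ = ∑ i, (v i : ℝ) := by simp only [fun i => (hV i).variance_eq, variance_id_gaussianReal]

section

variable (d m T : ℕ)

/-- Index type for the mutually independent noise sources: the initial condition
`X_0`, the process noises `B_1,…,B_T`, and the observation noises `W_1,…,W_{T+1}`. -/
abbrev NoiseIdx (T : ℕ) : Type := Unit ⊕ Fin T ⊕ Fin (T + 1)

abbrev NoiseSpace (d m : ℕ) : NoiseIdx T → Type
  | .inl _ => Fin d → ℝ
  | .inr (.inl _) => Fin d → ℝ
  | .inr (.inr _) => Fin m → ℝ

noncomputable instance (i : NoiseIdx T) : MeasurableSpace (NoiseSpace T d m i) := by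
  cases i with
  | inl _ => infer_instance
  | inr j => cases j with
    | inl _ => infer_instance
    | inr _ => infer_instance

def noiseFamily {Ω : Type*} (X0 : Ω → Fin d → ℝ) (B : ℕ → Ω → Fin d → ℝ)
    (W : ℕ → Ω → Fin m → ℝ) : (i : NoiseIdx T) → Ω → NoiseSpace T d m i
  | .inl _ => X0
  | .inr (.inl t) => B ((t : ℕ) + 1)
  | .inr (.inr t) => W ((t : ℕ) + 1)

section Model

variable {d m T}

/-- The weight of `W_{t+1}` is `u_t` for `t < T`; `W_{T+1}` does not enter `S_T`. -/
def scalarNoise (μ0 : Fin d → ℝ) (y : ℕ → Fin d → ℝ) (u : ℕ → Fin m → ℝ) :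
    (i : NoiseIdx T) → NoiseSpace T d m i → ℝ
  | .inl _ => fun x => y 0 ⬝ᵥ (x - μ0)
  | .inr (.inl t) => fun b => y ((t : ℕ) + 1) ⬝ᵥ b
  | .inr (.inr t) => fun w => (if (t : ℕ) < T then u t else 0) ⬝ᵥ w

def scalarNoiseVariance (Sig0 Q : Matrix (Fin d) (Fin d) ℝ) (R : Matrix (Fin m) (Fin m) ℝ)
    (y : ℕ → Fin d → ℝ) (u : ℕ → Fin m → ℝ) : NoiseIdx T → ℝ
  | .inl _ => y 0 ⬝ᵥ Sig0 *ᵥ y 0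
  | .inr (.inl t) => y ((t : ℕ) + 1) ⬝ᵥ Q *ᵥ y ((t : ℕ) + 1)
  | .inr (.inr t) => (if (t : ℕ) < T then u t else 0) ⬝ᵥ R *ᵥ (if (t : ℕ) < T then u t else 0)

theorem measurable_scalarNoise (μ0 : Fin d → ℝ) (y : ℕ → Fin d → ℝ) (u : ℕ → Fin m → ℝ)
    (i : NoiseIdx T) : Measurable (scalarNoise μ0 y u i) := by
  rcases i with _ | t | t <;> simp only [scalarNoise] <;> fun_prop

theorem hasLaw_scalarNoise {Ω : Type*} [MeasurableSpace Ω] {P : Measure Ω}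
    {Sig0 Q : Matrix (Fin d) (Fin d) ℝ} {R : Matrix (Fin m) (Fin m) ℝ} {μ0 : Fin d → ℝ}
    {X0 : Ω → Fin d → ℝ} {B : ℕ → Ω → Fin d → ℝ} {W : ℕ → Ω → Fin m → ℝ}
    (hX0m : Measurable X0) (hBm : ∀ t, Measurable (B t)) (hWm : ∀ t, Measurable (W t))
    (hX0g : ∀ a : Fin d → ℝ, Measure.map (fun ω => a ⬝ᵥ X0 ω) P =
      gaussianReal (a ⬝ᵥ μ0) (a ⬝ᵥ Sig0 *ᵥ a).toNNReal)
    (hBg : ∀ t, 1 ≤ t → t ≤ T → ∀ a : Fin d → ℝ,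
      Measure.map (fun ω => a ⬝ᵥ B t ω) P = gaussianReal 0 (a ⬝ᵥ Q *ᵥ a).toNNReal)
    (hWg : ∀ t, 1 ≤ t → t ≤ T + 1 → ∀ a : Fin m → ℝ,
      Measure.map (fun ω => a ⬝ᵥ W t ω) P = gaussianReal 0 (a ⬝ᵥ R *ᵥ a).toNNReal)
    (y : ℕ → Fin d → ℝ) (u : ℕ → Fin m → ℝ) (i : NoiseIdx T) :
    HasLaw (scalarNoise μ0 y u i ∘ noiseFamily d m T X0 B W i)
      (gaussianReal 0 (scalarNoiseVariance Sig0 Q R y u i).toNNReal) P := by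
  rcases i with ⟨⟩ | t | t
  · have hcenter : HasLaw (fun x => x - y 0 ⬝ᵥ μ0)
        (gaussianReal 0 (y 0 ⬝ᵥ Sig0 *ᵥ y 0).toNNReal)
        (gaussianReal (y 0 ⬝ᵥ μ0) (y 0 ⬝ᵥ Sig0 *ᵥ y 0).toNNReal) :=
      ⟨by fun_prop, by rw [gaussianReal_map_sub_const, sub_self]⟩
    refine (hcenter.comp ⟨by fun_prop, hX0g (y 0)⟩).congr (ae_of_all _ fun ω => ?_)
    simp only [Function.comp_apply, scalarNoise, noiseFamily, dotProduct_sub]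
  · exact ⟨by simp only [scalarNoise, noiseFamily]; fun_prop, hBg _ (by omega) (by omega) _⟩
  · exact ⟨by simp only [scalarNoise, noiseFamily]; fun_prop, hWg _ (by omega) (by omega) _⟩

theorem scalarNoiseVariance_nonneg {Sig0 Q : Matrix (Fin d) (Fin d) ℝ}
    {R : Matrix (Fin m) (Fin m) ℝ}
    (hSig0 : Sig0.PosSemidef) (hQ : Q.PosSemidef) (hR : R.PosSemidef)
    (y : ℕ → Fin d → ℝ) (u : ℕ → Fin m → ℝ) (i : NoiseIdx T) :
    0 ≤ scalarNoiseVariance Sig0 Q R y u i := by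
  rcases i with ⟨⟩ | t | t
  · exact hSig0.dotProduct_mulVec_nonneg _
  · exact hQ.dotProduct_mulVec_nonneg _
  · exact hR.dotProduct_mulVec_nonneg _

theorem sum_scalarNoiseVariance (Sig0 Q : Matrix (Fin d) (Fin d) ℝ) (R : Matrix (Fin m) (Fin m) ℝ)
    (y : ℕ → Fin d → ℝ) (u : ℕ → Fin m → ℝ) :
    ∑ i : NoiseIdx T, scalarNoiseVariance Sig0 Q R y u i =
      y 0 ⬝ᵥ Sig0 *ᵥ y 0 + ∑ t ∈ range T, y (t + 1) ⬝ᵥ Q *ᵥ y (t + 1) +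
        ∑ t ∈ range T, u t ⬝ᵥ R *ᵥ u t := by
  simp [scalarNoiseVariance, Fin.sum_univ_castSucc, add_assoc,
    Fin.sum_univ_eq_sum_range (fun t => y (t + 1) ⬝ᵥ Q *ᵥ y (t + 1)),
    Fin.sum_univ_eq_sum_range (fun t => u t ⬝ᵥ R *ᵥ u t)]

theorem estimationError_eq_sum_scalarNoise {Ω : Type*} {τ : ℕ}
    {A : ℕ → ℕ → Matrix (Fin d) (Fin d) ℝ} {C : Matrix (Fin m) (Fin d) ℝ} {μ0 f : Fin d → ℝ}
    {X0 : Ω → Fin d → ℝ} {B X : ℕ → Ω → Fin d → ℝ} {W Z : ℕ → Ω → Fin m → ℝ}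
    {u : ℕ → Fin m → ℝ} {y : ℕ → Fin d → ℝ}
    (hXinit : X 0 = X0)
    (hXdyn : ∀ t < T, ∀ ω, X (t + 1) ω =
      (∑ s ∈ Icc 1 (min τ (t + 1)), A (t + 1) s *ᵥ X (t + 1 - s) ω) + B (t + 1) ω)
    (hZdyn : ∀ t ≤ T, ∀ ω, Z (t + 1) ω = C *ᵥ X t ω + W (t + 1) ω)
    (hyT : y T = f)
    (hy : ∀ t < T, y t =
      (∑ s ∈ Icc 1 (min τ (T - t)), (A (t + s) s)ᵀ *ᵥ y (t + s)) + Cᵀ *ᵥ u t) (ω : Ω) :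
    f ⬝ᵥ X T ω - (μ0 ⬝ᵥ y 0 - ∑ t ∈ range T, u t ⬝ᵥ Z (t + 1) ω) =
      ∑ i, scalarNoise μ0 y u i (noiseFamily d m T X0 B W i ω) := by
  have hpairing := dotProduct_add_sum_eq_of_adjoint_recursion T τ A C
    (x := fun t => X t ω) (b := fun t => B t ω) (fun t ht => hXdyn t ht ω) hy
  have hobs : ∑ t ∈ range T, u t ⬝ᵥ Z (t + 1) ω =
      ∑ t ∈ range T, u t ⬝ᵥ C *ᵥ X t ω + ∑ t ∈ range T, u t ⬝ᵥ W (t + 1) ω := by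
    rw [← sum_add_distrib]
    exact sum_congr rfl fun t ht => by
      rw [hZdyn t (mem_range.1 ht).le, dotProduct_add]
  simp only [Fintype.sum_sum_type, Fintype.sum_unique, Fin.sum_univ_castSucc, scalarNoise,
    noiseFamily, Fin.val_castSucc, Fin.is_lt, ↓reduceIte, Fin.val_last, lt_self_iff_false,
    zero_dotProduct, add_zero, dotProduct_sub,
    Fin.sum_univ_eq_sum_range (fun t => y (t + 1) ⬝ᵥ B (t + 1) ω),
    Fin.sum_univ_eq_sum_range (fun t => u t ⬝ᵥ W (t + 1) ω)]
  subst hXinit hyT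
  rw [hobs, dotProduct_comm μ0]
  linear_combination hpairing

end Model

theorem duality_linear_gaussian {Ω : Type*} [MeasurableSpace Ω]
    (P : Measure Ω) [IsProbabilityMeasure P] (τ : ℕ)
    (A : ℕ → ℕ → Matrix (Fin d) (Fin d) ℝ) (C : Matrix (Fin m) (Fin d) ℝ)
    (Sig0 Q : Matrix (Fin d) (Fin d) ℝ) (R : Matrix (Fin m) (Fin m) ℝ)
    (hSig0 : Sig0.PosSemidef) (hQ : Q.PosSemidef) (hR : R.PosDef)
    (μ0 f : Fin d → ℝ)
    (X0 : Ω → Fin d → ℝ) (B : ℕ → Ω → Fin d → ℝ) (W : ℕ → Ω → Fin m → ℝ)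
    (X : ℕ → Ω → Fin d → ℝ) (Z : ℕ → Ω → Fin m → ℝ)
    (hX0m : Measurable X0) (hBm : ∀ t, Measurable (B t)) (hWm : ∀ t, Measurable (W t))
    -- mutual independence of (X_0, B, W)
    (hIndep : iIndepFun
      (noiseFamily d m T X0 B W) P)
    -- Gaussian laws, via one-dimensional projections
    (hX0g : ∀ a : Fin d → ℝ, Measure.map (fun ω => a ⬝ᵥ X0 ω) P =
      gaussianReal (a ⬝ᵥ μ0) (a ⬝ᵥ Sig0.mulVec a).toNNReal)
    (hBg : ∀ t, 1 ≤ t → t ≤ T → ∀ a : Fin d → ℝ,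
      Measure.map (fun ω => a ⬝ᵥ B t ω) P = gaussianReal 0 (a ⬝ᵥ Q.mulVec a).toNNReal)
    (hWg : ∀ t, 1 ≤ t → t ≤ T + 1 → ∀ a : Fin m → ℝ,
      Measure.map (fun ω => a ⬝ᵥ W t ω) P = gaussianReal 0 (a ⬝ᵥ R.mulVec a).toNNReal)
    -- state dynamics and observation model
    (hXinit : X 0 = X0)
    (hXdyn : ∀ t < T, ∀ ω, X (t + 1) ω =
      (∑ s ∈ Icc 1 (min τ (t + 1)), (A (t + 1) s).mulVec (X (t + 1 - s) ω)) + B (t + 1) ω)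
    (hZdyn : ∀ t ≤ T, ∀ ω, Z (t + 1) ω = C.mulVec (X t ω) + W (t + 1) ω)
    -- deterministic control and backward dual process
    (u : ℕ → Fin m → ℝ) (y : ℕ → Fin d → ℝ)
    (hyT : y T = f)
    (hy : ∀ t < T, y t =
      (∑ s ∈ Icc 1 (min τ (T - t)), (A (t + s) s)ᵀ.mulVec (y (t + s))) + Cᵀ.mulVec (u t)) :
    ∫ ω, (f ⬝ᵥ X T ω - (μ0 ⬝ᵥ y 0 - ∑ t ∈ range T, u t ⬝ᵥ Z (t + 1) ω)) ^ 2 ∂P =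
      y 0 ⬝ᵥ Sig0.mulVec (y 0) + (∑ t ∈ range T, y (t + 1) ⬝ᵥ Q.mulVec (y (t + 1))) +
        ∑ t ∈ range T, u t ⬝ᵥ R.mulVec (u t) := by
  have hV := hasLaw_scalarNoise hX0m hBm hWm hX0g hBg hWg y u
  have hindep := hIndep.comp _ (measurable_scalarNoise μ0 y u)
  calc _ = ∫ ω, (∑ i, (scalarNoise μ0 y u i ∘ noiseFamily d m T X0 B W i) ω) ^ 2 ∂P := by
        simp only [estimationError_eq_sum_scalarNoise hXinit hXdyn hZdyn hyT hy,
          Function.comp_apply]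
    _ = ∑ i, ((scalarNoiseVariance Sig0 Q R y u i).toNNReal : ℝ) :=
        integral_sq_sum_of_iIndepFun_gaussianReal hindep hV
    _ = _ := by
        rw [← sum_scalarNoiseVariance]
        exact sum_congr rfl fun i _ =>
          Real.coe_toNNReal _ (scalarNoiseVariance_nonneg hSig0 hQ hR.posSemidef y u i)

end
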